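/- Let 𝔤 be a finite-dimensional real 2-step nilpotent Lie algebra, let Δ ⊆ 𝔤 be a subspace equipped with an inner product ρ, let E be a finite set of positive integers, let a, b : E → Δ, and define v : [0,1] → 𝔤 by v(t) := Σ_{n∈E} ( a_n cos(2πnt) − b_n sin(2πnt) ). Then the endpoint satisfies E(v) = Σ_{n∈E} (1/(4πn)) ⁅b_n, a_n⁆, and the energy satisfies ∫₀¹ ρ(v(t),v(t)) dt = (1/2) Σ_{n∈E} ( ρ(a_n,a_n) + ρ(b_n,b_n) ). -/

import Mathlib

/-!
The energy identity is orthogonality of `cos (2πnt)`, `sin (2πnt)` (`n > 0`) on `[0, 1]`: when a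
bilinear expression in two trigonometric polynomials is integrated, only the diagonal terms
survive, each with weight `1/2`. For the endpoint, `∫ v = 0`, and the primitive of the mode
`a cos − b sin` is the rotated mode `(b cos + a sin)/(2πn)` minus the constant `b/(2πn)`. The
constant contributes nothing against `v`, the rotated mode contributes
`(⁅b, a⁆ − ⁅a, b⁆)/(4πn) = ⁅b, a⁆/(2πn)` by antisymmetry, and the factor `1/2` in the endpoint
gives `1/(4πn)`.
-/

open MeasureTheory

/-- The endpoint of the horizontal curve with control `u` in the 2-step model group `(𝔤,∗)`. -/
noncomputable def endpointMap {L : Type*} [NormedAddCommGroup L] [NormedSpace ℝ L]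
    (bracket : L →ₗ[ℝ] L →ₗ[ℝ] L) (u : ℝ → L) : L :=
  (∫ t in (0:ℝ)..1, u t) +
    (2⁻¹ : ℝ) • ∫ t in (0:ℝ)..1, bracket (∫ s in (0:ℝ)..t, u s) (u t)

open Real

theorem integral_cos_mul {k : ℝ} (hk : k ≠ 0) (t : ℝ) :
    ∫ s in (0:ℝ)..t, cos (k * s) = sin (k * t) / k := by
  rw [intervalIntegral.integral_comp_mul_left (fun x => cos x) hk]
  simp [integral_cos, div_eq_inv_mul]

theorem integral_sin_mul {k : ℝ} (hk : k ≠ 0) (t : ℝ) :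
    ∫ s in (0:ℝ)..t, sin (k * s) = (1 - cos (k * t)) / k := by
  rw [intervalIntegral.integral_comp_mul_left (fun x => sin x) hk]
  simp [integral_sin, div_eq_inv_mul]

theorem two_pi_mul_int_ne_zero {k : ℤ} (hk : k ≠ 0) : 2 * π * k ≠ 0 := by
  have := pi_ne_zero
  simp_all

theorem integral_cos_two_pi_int_mul (k : ℤ) :
    ∫ t in (0:ℝ)..1, cos (2 * π * k * t) = if k = 0 then 1 else 0 := by
  split_ifs with hk
  · simp [hk]
  · have hsin : sin (2 * π * k) = 0 := by
      simpa [mul_assoc, mul_comm, mul_left_comm] using sin_int_mul_pi (2 * k)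
    simp [integral_cos_mul (two_pi_mul_int_ne_zero hk), hsin]

theorem integral_sin_two_pi_int_mul (k : ℤ) : ∫ t in (0:ℝ)..1, sin (2 * π * k * t) = 0 := by
  rcases eq_or_ne k 0 with rfl | hk
  · simp
  · have hcos : cos (2 * π * k) = 1 := by
      simpa [mul_comm] using cos_int_mul_two_pi k
    simp [integral_sin_mul (two_pi_mul_int_ne_zero hk), hcos]

theorem two_pi_int_sub_mul (m n : ℤ) (t : ℝ) :
    2 * π * ↑(m - n) * t = 2 * π * m * t - 2 * π * n * t := by
  push_cast; ring

theorem two_pi_int_add_mul (m n : ℤ) (t : ℝ) :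
    2 * π * ↑(m + n) * t = 2 * π * m * t + 2 * π * n * t := by
  push_cast; ring

theorem integral_cos_mul_cos_two_pi {m n : ℤ} (hm : 0 < m) (hn : 0 < n) :
    ∫ t in (0:ℝ)..1, cos (2 * π * m * t) * cos (2 * π * n * t) = if m = n then 2⁻¹ else 0 := by
  have hprod : ∀ t : ℝ, cos (2 * π * m * t) * cos (2 * π * n * t)
      = (cos (2 * π * ↑(m - n) * t) + cos (2 * π * ↑(m + n) * t)) / 2 := fun t => by
    rw [two_pi_int_sub_mul, two_pi_int_add_mul, cos_sub, cos_add]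
    ring
  simp_rw [hprod]
  rw [intervalIntegral.integral_div,
    intervalIntegral.integral_add (Continuous.intervalIntegrable (by fun_prop) _ _)
      (Continuous.intervalIntegrable (by fun_prop) _ _), integral_cos_two_pi_int_mul,
    integral_cos_two_pi_int_mul, if_neg (by omega : m + n ≠ 0)]
  simp only [sub_eq_zero]
  split_ifs <;> norm_num

theorem integral_sin_mul_sin_two_pi {m n : ℤ} (hm : 0 < m) (hn : 0 < n) :
    ∫ t in (0:ℝ)..1, sin (2 * π * m * t) * sin (2 * π * n * t) = if m = n then 2⁻¹ else 0 := by
  have hprod : ∀ t : ℝ, sin (2 * π * m * t) * sin (2 * π * n * t)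
      = (cos (2 * π * ↑(m - n) * t) - cos (2 * π * ↑(m + n) * t)) / 2 := fun t => by
    rw [two_pi_int_sub_mul, two_pi_int_add_mul, cos_sub, cos_add]
    ring
  simp_rw [hprod]
  rw [intervalIntegral.integral_div,
    intervalIntegral.integral_sub (Continuous.intervalIntegrable (by fun_prop) _ _)
      (Continuous.intervalIntegrable (by fun_prop) _ _), integral_cos_two_pi_int_mul,
    integral_cos_two_pi_int_mul, if_neg (by omega : m + n ≠ 0)]
  simp only [sub_eq_zero]
  split_ifs <;> norm_num

theorem integral_sin_mul_cos_two_pi (m n : ℤ) :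
    ∫ t in (0:ℝ)..1, sin (2 * π * m * t) * cos (2 * π * n * t) = 0 := by
  have hprod : ∀ t : ℝ, sin (2 * π * m * t) * cos (2 * π * n * t)
      = (sin (2 * π * ↑(m + n) * t) + sin (2 * π * ↑(m - n) * t)) / 2 := fun t => by
    rw [two_pi_int_sub_mul, two_pi_int_add_mul, sin_sub, sin_add]
    ring
  simp_rw [hprod]
  rw [intervalIntegral.integral_div,
    intervalIntegral.integral_add (Continuous.intervalIntegrable (by fun_prop) _ _)
      (Continuous.intervalIntegrable (by fun_prop) _ _), integral_sin_two_pi_int_mul,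
    integral_sin_two_pi_int_mul]
  norm_num

theorem integral_cos_mul_sin_two_pi (m n : ℤ) :
    ∫ t in (0:ℝ)..1, cos (2 * π * m * t) * sin (2 * π * n * t) = 0 := by
  simpa only [mul_comm] using integral_sin_mul_cos_two_pi n m

noncomputable def trigMode {M : Type*} [AddCommGroup M] [Module ℝ M] (n : ℤ) (x y : M) (t : ℝ) :
    M :=
  cos (2 * π * n * t) • x - sin (2 * π * n * t) • y

noncomputable def trigPoly {M : Type*} [AddCommGroup M] [Module ℝ M] (E : Finset ℤ)
    (a b : ℤ → M) (t : ℝ) : M :=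
  ∑ n ∈ E, trigMode n (a n) (b n) t

section Algebraic

variable {L L' M : Type*} [AddCommGroup L] [Module ℝ L] [AddCommGroup L'] [Module ℝ L']
  [AddCommGroup M] [Module ℝ M]

theorem LinearMap.map_trigPoly (f : L →ₗ[ℝ] M) (E : Finset ℤ) (a b : ℤ → L) (t : ℝ) :
    f (trigPoly E a b t) = trigPoly E (fun n => f (a n)) (fun n => f (b n)) t := by
  simp [trigPoly, trigMode]

theorem LinearMap.map_trigMode₂ (B : L →ₗ[ℝ] L' →ₗ[ℝ] M) (m n : ℤ) (x y : L) (x' y' : L')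
    (t : ℝ) :
    B (trigMode m x y t) (trigMode n x' y' t) =
      (cos (2 * π * m * t) * cos (2 * π * n * t)) • B x x'
        - (cos (2 * π * m * t) * sin (2 * π * n * t)) • B x y'
        - (sin (2 * π * m * t) * cos (2 * π * n * t)) • B y x'
        + (sin (2 * π * m * t) * sin (2 * π * n * t)) • B y y' := by
  simp only [trigMode, map_sub, map_smul, LinearMap.sub_apply, LinearMap.smul_apply, smul_sub,
    smul_smul]
  module

end Algebraic

section Analytic

variable {L L' M : Type*} [AddCommGroup L] [Module ℝ L] [AddCommGroup L'] [Module ℝ L']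
  [NormedAddCommGroup M] [NormedSpace ℝ M]

theorem continuous_trigPoly (E : Finset ℤ) (a b : ℤ → M) : Continuous (trigPoly E a b) := by
  unfold trigPoly trigMode
  fun_prop

theorem continuous_trigPoly₂ (B : L →ₗ[ℝ] L' →ₗ[ℝ] M) (E : Finset ℤ) (x y : ℤ → L)
    (x' y' : ℤ → L') : Continuous fun t => B (trigPoly E x y t) (trigPoly E x' y' t) := by
  simp only [trigPoly, map_sum, LinearMap.sum_apply, LinearMap.map_trigMode₂]
  fun_prop

variable [CompleteSpace M]

theorem integral_trigMode {n : ℤ} (hn : n ≠ 0) (x y : M) :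
    ∫ t in (0:ℝ)..1, trigMode n x y t = 0 := by
  simp only [trigMode]
  rw [intervalIntegral.integral_sub (Continuous.intervalIntegrable (by fun_prop) _ _)
      (Continuous.intervalIntegrable (by fun_prop) _ _), intervalIntegral.integral_smul_const,
    intervalIntegral.integral_smul_const, integral_cos_two_pi_int_mul,
    integral_sin_two_pi_int_mul, if_neg hn]
  simp

theorem integral_trigPoly {E : Finset ℤ} (hE : ∀ n ∈ E, n ≠ 0) (a b : ℤ → M) :
    ∫ t in (0:ℝ)..1, trigPoly E a b t = 0 := by
  unfold trigPoly
  rw [intervalIntegral.integral_finsetSum fun n _ =>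
    Continuous.intervalIntegrable (by unfold trigMode; fun_prop) _ _]
  exact Finset.sum_eq_zero fun n hn => integral_trigMode (hE n hn) _ _

theorem integral_linearMap_trigPoly (f : L →ₗ[ℝ] M) {E : Finset ℤ} (hE : ∀ n ∈ E, n ≠ 0)
    (a b : ℤ → L) : ∫ t in (0:ℝ)..1, f (trigPoly E a b t) = 0 := by
  simp only [LinearMap.map_trigPoly]
  exact integral_trigPoly hE _ _

theorem integral_zero_to_trigMode {n : ℤ} (hn : n ≠ 0) (x y : M) (t : ℝ) :
    ∫ s in (0:ℝ)..t, trigMode n x y s =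
      trigMode n ((2 * π * n)⁻¹ • y) (-(2 * π * n)⁻¹ • x) t - (2 * π * n)⁻¹ • y := by
  simp only [trigMode]
  rw [intervalIntegral.integral_sub (Continuous.intervalIntegrable (by fun_prop) _ _)
      (Continuous.intervalIntegrable (by fun_prop) _ _), intervalIntegral.integral_smul_const,
    intervalIntegral.integral_smul_const, integral_cos_mul (two_pi_mul_int_ne_zero hn),
    integral_sin_mul (two_pi_mul_int_ne_zero hn)]
  module

theorem integral_zero_to_trigPoly {E : Finset ℤ} (hE : ∀ n ∈ E, n ≠ 0) (a b : ℤ → M) (t : ℝ) :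
    ∫ s in (0:ℝ)..t, trigPoly E a b s =
      trigPoly E (fun n => (2 * π * n)⁻¹ • b n) (fun n => -(2 * π * n)⁻¹ • a n) t
        - ∑ n ∈ E, (2 * π * n)⁻¹ • b n := by
  unfold trigPoly
  rw [intervalIntegral.integral_finsetSum fun n _ =>
    Continuous.intervalIntegrable (by unfold trigMode; fun_prop) _ _, ← Finset.sum_sub_distrib]
  exact Finset.sum_congr rfl fun n hn => integral_zero_to_trigMode (hE n hn) _ _ t

theorem integral_trigMode₂ (B : L →ₗ[ℝ] L' →ₗ[ℝ] M) {m n : ℤ} (hm : 0 < m) (hn : 0 < n)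
    (x y : L) (x' y' : L') :
    ∫ t in (0:ℝ)..1, B (trigMode m x y t) (trigMode n x' y' t) =
      if m = n then (2⁻¹ : ℝ) • (B x x' + B y y') else 0 := by
  simp only [LinearMap.map_trigMode₂]
  rw [intervalIntegral.integral_add (Continuous.intervalIntegrable (by fun_prop) _ _)
      (Continuous.intervalIntegrable (by fun_prop) _ _),
    intervalIntegral.integral_sub (Continuous.intervalIntegrable (by fun_prop) _ _)
      (Continuous.intervalIntegrable (by fun_prop) _ _),
    intervalIntegral.integral_sub (Continuous.intervalIntegrable (by fun_prop) _ _)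
      (Continuous.intervalIntegrable (by fun_prop) _ _)]
  simp only [intervalIntegral.integral_smul_const, integral_cos_mul_cos_two_pi hm hn,
    integral_sin_mul_sin_two_pi hm hn, integral_sin_mul_cos_two_pi, integral_cos_mul_sin_two_pi]
  split_ifs <;> module

theorem integral_trigPoly₂ (B : L →ₗ[ℝ] L' →ₗ[ℝ] M) {E : Finset ℤ} (hE : ∀ n ∈ E, 0 < n)
    (x y : ℤ → L) (x' y' : ℤ → L') :
    ∫ t in (0:ℝ)..1, B (trigPoly E x y t) (trigPoly E x' y' t) =
      (2⁻¹ : ℝ) • ∑ n ∈ E, (B (x n) (x' n) + B (y n) (y' n)) := by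
  simp only [trigPoly, map_sum, LinearMap.sum_apply]
  rw [intervalIntegral.integral_finsetSum fun m _ => Continuous.intervalIntegrable
    (continuous_finsetSum _ fun n _ => by simp only [LinearMap.map_trigMode₂]; fun_prop) _ _,
    Finset.smul_sum]
  refine Finset.sum_congr rfl fun n hn => ?_
  rw [intervalIntegral.integral_finsetSum fun m _ => Continuous.intervalIntegrable
      (by simp only [LinearMap.map_trigMode₂]; fun_prop) _ _,
    Finset.sum_congr rfl fun m hm => integral_trigMode₂ B (hE m hm) (hE n hn) _ _ _ _,
    Finset.sum_ite_eq', if_pos hn]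

end Analytic

theorem integral_primitive_trigPoly₂ {L M : Type*} [NormedAddCommGroup L] [NormedSpace ℝ L]
    [CompleteSpace L] [NormedAddCommGroup M] [NormedSpace ℝ M] [CompleteSpace M]
    (B : L →ₗ[ℝ] L →ₗ[ℝ] M) {E : Finset ℤ} (hE : ∀ n ∈ E, 0 < n) (a b : ℤ → L) :
    ∫ t in (0:ℝ)..1, B (∫ s in (0:ℝ)..t, trigPoly E a b s) (trigPoly E a b t) =
      (2⁻¹ : ℝ) • ∑ n ∈ E, (2 * π * n)⁻¹ • (B (b n) (a n) - B (a n) (b n)) := by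
  have hE0 : ∀ n ∈ E, n ≠ 0 := fun n hn => (hE n hn).ne'
  simp only [integral_zero_to_trigPoly hE0, map_sub, LinearMap.sub_apply]
  rw [intervalIntegral.integral_sub ((continuous_trigPoly₂ B E _ _ a b).intervalIntegrable 0 1)
      (Continuous.intervalIntegrable
        (by simp only [LinearMap.map_trigPoly]; exact continuous_trigPoly E _ _) 0 1),
    integral_linearMap_trigPoly _ hE0, integral_trigPoly₂ B hE, sub_zero]
  congr 1
  refine Finset.sum_congr rfl fun n _ => ?_
  simp only [map_smul, LinearMap.smul_apply]
  module

theorem stmt_4 {L : Type*} [NormedAddCommGroup L] [NormedSpace ℝ L] [FiniteDimensional ℝ L]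
    (bracket : L →ₗ[ℝ] L →ₗ[ℝ] L)
    (halt : ∀ x : L, bracket x x = 0)
    (ρ : L →ₗ[ℝ] L →ₗ[ℝ] ℝ)
    (E : Finset ℤ) (hE : ∀ n ∈ E, 0 < n)
    (a b : ℤ → L)
    (v : ℝ → L)
    (hv : ∀ t : ℝ, v t = ∑ n ∈ E,
      (Real.cos (2 * Real.pi * (n : ℝ) * t) • a n - Real.sin (2 * Real.pi * (n : ℝ) * t) • b n)) :
    endpointMap bracket v =
      ∑ n ∈ E, ((4 * Real.pi * (n : ℝ))⁻¹) • bracket (b n) (a n) ∧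
    (∫ t in (0:ℝ)..1, ρ (v t) (v t)) =
      (2⁻¹ : ℝ) * ∑ n ∈ E, (ρ (a n) (a n) + ρ (b n) (b n)) := by
  obtain rfl : v = trigPoly E a b := funext hv
  refine ⟨?_, by rw [integral_trigPoly₂ ρ hE, smul_eq_mul]⟩
  rw [endpointMap, integral_trigPoly fun n hn => (hE n hn).ne',
    integral_primitive_trigPoly₂ bracket hE, zero_add]
  simp only [Finset.smul_sum]
  refine Finset.sum_congr rfl fun n _ => ?_
  rw [← LinearMap.IsAlt.neg halt (a n) (b n)]
  have hπ := pi_ne_zero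
  match_scalars
  field_simp
  ring
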